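/- arXiv:2006.07651 — 2 statements merged into one kernel-verified Lean document; each statement's English description precedes it below -/
import Mathlib

section
/- The sequence (U_n)_{n≥1} is strongly (S)-convergent if and only if for every b ∈ C_c(ℝ^D) there exists \bar{b} ∈ L^∞(Q) such that for every w ∈ W, (1/w_N) Σ_{n=1}^N w(n/N) b(U_n) → \bar{b} strongly in L¹(Q) as N → ∞, with the limit \bar{b} independent of the choice of w ∈ W. -/
/-!
In `L²(Q)` put `A_w(N) = (1/w_N) ∑_{n ≤ N} w(n/N) b(U_n)`. Condition (i) says that, as `N → ∞`,
`⟪A_w(N), A_w'(K)⟫` tends to the `w'`-average `G_w'(K)` of the limits `ℓ m`, and (ii) says that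
`‖A_w(N)‖²` and `G_w(K)` have a common limit `L_w`. Cauchy–Schwarz forces all the `L_w` to agree,
and then `‖A_w(N) - A_w'(K)‖² → 0` in the iterated limit, so all the averages converge in `L²` to
a single `b̄`. It is bounded because the averages are, and on the finite-measure set `Q`, `L²`
convergence gives `L¹` convergence. Conversely, `L¹` convergence of the bounded averages lets one
pass to the limit in their pairings with the bounded functions `b(U_m)`, `b̄` and the averages
themselves, which gives `ℓ m = ∫ b̄ b(U_m)` and `L_w = ∫ b̄²`.
-/

open MeasureTheory Filter Topology

noncomputable section

/-- The class `W` of weight functions: `w ∈ C¹([0,1])`, `w ≥ 0` on `[0,1]`,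
`∫_0^1 w(z) dz = 1`. -/
def IsWeight (w : ℝ → ℝ) : Prop :=
  ContDiffOn ℝ 1 w (Set.Icc 0 1) ∧ (∀ z ∈ Set.Icc (0 : ℝ) 1, 0 ≤ w z) ∧
    (∫ z in (0 : ℝ)..1, w z) = 1

/-- `w_N = ∑_{n=1}^N w(n/N)`. -/
def wsum (w : ℝ → ℝ) (N : ℕ) : ℝ := ∑ n ∈ Finset.Icc 1 N, w ((n : ℝ) / (N : ℝ))

/-- Strong (S)-convergence of a sequence `(U_n)_{n ≥ 1}` of measurable functions `Q → ℝ^D`: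
for every `b ∈ C_c(ℝ^D)`, (i) the weighted correlation limits
`ℓ m = lim_N (1/w_N) ∑_{n=1}^N w(n/N) ∫_Q b(U_n) b(U_m)` exist for every fixed `m ≥ 1` and
every `w ∈ W`, independently of `w`, and (ii) for every `w ∈ W`,
`lim_N (1/w_N²) ∑_{n,m=1}^N w(n/N) w(m/N) ∫_Q b(U_n) b(U_m)
  = lim_M (1/w_M) ∑_{m=1}^M w(m/M) ℓ m` (both limits existing). -/
def StronglySConv {M D : ℕ} (Q : Set (Fin M → ℝ))
    (U : ℕ → (Fin M → ℝ) → EuclideanSpace ℝ (Fin D)) : Prop :=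
  ∀ b : EuclideanSpace ℝ (Fin D) → ℝ, Continuous b → HasCompactSupport b →
    ∃ ℓ : ℕ → ℝ,
      (∀ w : ℝ → ℝ, IsWeight w → ∀ m : ℕ, 1 ≤ m →
        Tendsto (fun N : ℕ => (wsum w N)⁻¹ *
            ∑ n ∈ Finset.Icc 1 N, w ((n : ℝ) / (N : ℝ)) * ∫ y in Q, b (U n y) * b (U m y))
          atTop (𝓝 (ℓ m))) ∧
      (∀ w : ℝ → ℝ, IsWeight w → ∃ L : ℝ,
        Tendsto (fun N : ℕ => ((wsum w N) ^ 2)⁻¹ *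
            ∑ n ∈ Finset.Icc 1 N, ∑ m ∈ Finset.Icc 1 N,
              w ((n : ℝ) / (N : ℝ)) * w ((m : ℝ) / (N : ℝ)) *
                ∫ y in Q, b (U n y) * b (U m y)) atTop (𝓝 L) ∧
        Tendsto (fun K : ℕ => (wsum w K)⁻¹ *
            ∑ m ∈ Finset.Icc 1 K, w ((m : ℝ) / (K : ℝ)) * ℓ m) atTop (𝓝 L))

open scoped RealInnerProductSpace ENNReal

def wavg {X : Type*} [AddCommMonoid X] [Module ℝ X] (w : ℝ → ℝ) (N : ℕ) (f : ℕ → X) : X :=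
  (wsum w N)⁻¹ • ∑ n ∈ Finset.Icc 1 N, w ((n : ℝ) / (N : ℝ)) • f n

section WeightedAverage

variable {X : Type*} [AddCommMonoid X] [Module ℝ X] {w : ℝ → ℝ} {N : ℕ}

lemma IsWeight.apply_div_nonneg (hw : IsWeight w) {n : ℕ} (hn : n ∈ Finset.Icc 1 N) :
    0 ≤ w ((n : ℝ) / (N : ℝ)) := by
  obtain ⟨h1, h2⟩ := Finset.mem_Icc.mp hn
  have hN : (0 : ℝ) < N := by exact_mod_cast h1.trans h2
  exact hw.2.1 _ ⟨by positivity, (div_le_one hN).mpr (by exact_mod_cast h2)⟩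

lemma isWeight_one : IsWeight fun _ => 1 :=
  ⟨contDiffOn_const, fun _ _ => zero_le_one, by simp⟩

lemma map_wavg {Y F : Type*} [AddCommMonoid Y] [Module ℝ Y] [FunLike F X Y]
    [LinearMapClass F ℝ X Y] (T : F) (f : ℕ → X) :
    T (wavg w N f) = wavg w N fun n => T (f n) := by
  simp only [wavg, map_smul, map_sum]

lemma wavg_mul (f : ℕ → ℝ) (c : ℝ) : wavg w N f * c = wavg w N fun n => f n * c :=
  map_wavg (LinearMap.mulRight ℝ c) f

lemma mul_wavg (c : ℝ) (f : ℕ → ℝ) : c * wavg w N f = wavg w N fun n => c * f n :=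
  map_wavg (LinearMap.mulLeft ℝ c) f

lemma inv_sq_mul_sum_sum_eq_wavg_wavg (I : ℕ → ℕ → ℝ) :
    ((wsum w N) ^ 2)⁻¹ * ∑ n ∈ Finset.Icc 1 N, ∑ m ∈ Finset.Icc 1 N,
        w ((n : ℝ) / (N : ℝ)) * w ((m : ℝ) / (N : ℝ)) * I n m
      = wavg w N fun n => wavg w N fun m => I n m := by
  simp only [wavg, smul_eq_mul, Finset.mul_sum]
  refine Finset.sum_congr rfl fun n _ => Finset.sum_congr rfl fun m _ => ?_
  ring

lemma abs_wavg_le (hw : IsWeight w) {f : ℕ → ℝ} {C : ℝ} (hf : ∀ n, |f n| ≤ C) :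
    |wavg w N f| ≤ C := by
  have hC : 0 ≤ C := (abs_nonneg _).trans (hf 0)
  have hsum : |∑ n ∈ Finset.Icc 1 N, w ((n : ℝ) / (N : ℝ)) * f n| ≤ wsum w N * C := by
    rw [wsum, Finset.sum_mul]
    refine (Finset.abs_sum_le_sum_abs _ _).trans (Finset.sum_le_sum fun n hn => ?_)
    rw [abs_mul, abs_of_nonneg (hw.apply_div_nonneg hn)]
    exact mul_le_mul_of_nonneg_left (hf n) (hw.apply_div_nonneg hn)
  have hw0 : 0 ≤ wsum w N := Finset.sum_nonneg fun _ hn => hw.apply_div_nonneg hn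
  simp only [wavg, smul_eq_mul, abs_mul, abs_inv, abs_of_nonneg hw0]
  rcases hw0.eq_or_lt with h0 | hpos
  · simp [← h0, hC]
  · calc (wsum w N)⁻¹ * |∑ n ∈ Finset.Icc 1 N, w ((n : ℝ) / (N : ℝ)) * f n|
        ≤ (wsum w N)⁻¹ * (wsum w N * C) := by gcongr
      _ = C := inv_mul_cancel_left₀ hpos.ne' C

lemma tendsto_wavg {Y ι : Type*} [AddCommMonoid Y] [Module ℝ Y] [TopologicalSpace Y]
    [ContinuousAdd Y] [ContinuousConstSMul ℝ Y] {l : Filter ι} {g : ι → ℕ → Y} {ℓ : ℕ → Y}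
    (h : ∀ n ∈ Finset.Icc 1 N, Tendsto (fun i => g i n) l (𝓝 (ℓ n))) :
    Tendsto (fun i => wavg w N (g i)) l (𝓝 (wavg w N ℓ)) :=
  (tendsto_finsetSum _ fun n hn => (h n hn).const_smul _).const_smul _

end WeightedAverage

lemma exists_tendsto_of_eventually_dist_lt {X : Type*} [PseudoMetricSpace X] [CompleteSpace X]
    {x y : ℕ → X} (h : ∀ ε > 0, ∀ᶠ K in atTop, ∀ᶠ N in atTop, dist (x N) (y K) < ε) :
    ∃ z, Tendsto x atTop (𝓝 z) ∧ Tendsto y atTop (𝓝 z) := by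
  have hx : CauchySeq x := by
    refine Metric.cauchySeq_iff'.mpr fun ε hε => ?_
    obtain ⟨K, hK⟩ := (h (ε / 2) (half_pos hε)).exists
    obtain ⟨N₀, hN₀⟩ := eventually_atTop.mp hK
    refine ⟨N₀, fun n hn => ?_⟩
    calc dist (x n) (x N₀) ≤ dist (x n) (y K) + dist (x N₀) (y K) := dist_triangle_right _ _ _
      _ < ε := by linarith [hN₀ n hn, hN₀ N₀ le_rfl]
  obtain ⟨z, hz⟩ := cauchySeq_tendsto_of_complete hx
  refine ⟨z, hz, Metric.tendsto_nhds.mpr fun ε hε => ?_⟩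
  filter_upwards [h (ε / 2) (half_pos hε)] with K hK
  have : dist z (y K) ≤ ε / 2 :=
    le_of_tendsto (hz.dist tendsto_const_nhds) (hK.mono fun _ => le_of_lt)
  rw [dist_comm]
  linarith

section Hilbert

variable {E ι : Type*} [NormedAddCommGroup E] [InnerProductSpace ℝ E] {A : ι → ℕ → E}
  {G : ι → ℕ → ℝ}

/-- Cauchy–Schwarz gives `⟪x N, y K⟫ ≤ (‖x N‖² + ‖y K‖²) / 2`; let `N → ∞`, then `K → ∞`. -/
lemma le_of_tendsto_inner {x y : ℕ → E} {g : ℕ → ℝ}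
    (hinner : ∀ K, Tendsto (fun N => ⟪x N, y K⟫) atTop (𝓝 (g K))) {L L' : ℝ}
    (hx : Tendsto (fun N => ‖x N‖ ^ 2) atTop (𝓝 L))
    (hy : Tendsto (fun K => ‖y K‖ ^ 2) atTop (𝓝 L')) (hg : Tendsto g atTop (𝓝 L')) :
    L' ≤ L := by
  have hgK : ∀ K, g K ≤ (L + ‖y K‖ ^ 2) / 2 := fun K =>
    le_of_tendsto_of_tendsto' (hinner K) ((hx.add_const _).div_const 2) fun N => by
      nlinarith [real_inner_le_norm (x N) (y K), sq_nonneg (‖x N‖ - ‖y K‖)]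
  linarith [le_of_tendsto_of_tendsto' hg ((hy.const_add L).div_const 2) hgK]

lemma eventually_dist_lt_of_tendsto_inner
    (hinner : ∀ i j K, Tendsto (fun N => ⟪A i N, A j K⟫) atTop (𝓝 (G j K)))
    (hnorm : ∀ i, ∃ L, Tendsto (fun N => ‖A i N‖ ^ 2) atTop (𝓝 L) ∧ Tendsto (G i) atTop (𝓝 L))
    (i j : ι) {ε : ℝ} (hε : 0 < ε) : ∀ᶠ K in atTop, ∀ᶠ N in atTop, dist (A i N) (A j K) < ε := by
  obtain ⟨L, hL, hGi⟩ := hnorm i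
  obtain ⟨L', hL', hGj⟩ := hnorm j
  obtain rfl : L = L' :=
    (le_of_tendsto_inner (hinner j i) hL' hL hGi).antisymm
      (le_of_tendsto_inner (hinner i j) hL hL' hGj)
  have hdist : ∀ K, Tendsto (fun N => dist (A i N) (A j K) ^ 2) atTop
      (𝓝 (L - 2 * G j K + ‖A j K‖ ^ 2)) := fun K => by
    simp only [dist_eq_norm, norm_sub_sq_real]
    exact ((hL.sub ((hinner i j K).const_mul 2)).add_const _)
  have hlim : Tendsto (fun K => L - 2 * G j K + ‖A j K‖ ^ 2) atTop (𝓝 0) := by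
    convert (tendsto_const_nhds.sub (hGj.const_mul 2)).add hL' using 2
    ring
  filter_upwards [hlim.eventually (gt_mem_nhds (pow_pos hε 2))] with K hK
  filter_upwards [(hdist K).eventually (gt_mem_nhds hK)] with N hN
  exact lt_of_pow_lt_pow_left₀ 2 hε.le hN

theorem exists_tendsto_of_tendsto_inner [CompleteSpace E] [Nonempty ι]
    (hinner : ∀ i j K, Tendsto (fun N => ⟪A i N, A j K⟫) atTop (𝓝 (G j K)))
    (hnorm : ∀ i, ∃ L, Tendsto (fun N => ‖A i N‖ ^ 2) atTop (𝓝 L) ∧ Tendsto (G i) atTop (𝓝 L)) :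
    ∃ x, ∀ i, Tendsto (A i) atTop (𝓝 x) := by
  have hlim : ∀ i j, ∃ z, Tendsto (A i) atTop (𝓝 z) ∧ Tendsto (A j) atTop (𝓝 z) := fun i j =>
    exists_tendsto_of_eventually_dist_lt fun _ hε =>
      eventually_dist_lt_of_tendsto_inner hinner hnorm i j hε
  obtain ⟨i₀⟩ := ‹Nonempty ι›
  obtain ⟨x, hx, -⟩ := hlim i₀ i₀
  refine ⟨x, fun i => ?_⟩
  obtain ⟨z, hz, hz₀⟩ := hlim i i₀
  rwa [tendsto_nhds_unique hx hz₀]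

end Hilbert

section InnerWeightedAverage

variable {E : Type*} [NormedAddCommGroup E] [InnerProductSpace ℝ E] {w : ℝ → ℝ} {N : ℕ}

lemma inner_wavg_right (x : E) (f : ℕ → E) : ⟪x, wavg w N f⟫ = wavg w N fun n => ⟪x, f n⟫ :=
  map_wavg (innerSL ℝ x) f

lemma inner_wavg_left (f : ℕ → E) (x : E) : ⟪wavg w N f, x⟫ = wavg w N fun n => ⟪f n, x⟫ := by
  simp only [real_inner_comm x, inner_wavg_right]

end InnerWeightedAverage

section Integration

variable {α : Type*} [MeasurableSpace α] {μ : Measure α} {w : ℝ → ℝ} {N : ℕ}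

lemma integral_wavg {E : Type*} [NormedAddCommGroup E] [NormedSpace ℝ E] {f : ℕ → α → E}
    (hf : ∀ n, Integrable (f n) μ) :
    ∫ y, wavg w N (fun n => f n y) ∂μ = wavg w N fun n => ∫ y, f n y ∂μ := by
  simp only [wavg]
  rw [integral_smul, integral_finsetSum]
  · simp only [integral_smul]
  · exact fun n _ => (hf n).smul _

lemma integral_wavg_mul {f : ℕ → α → ℝ} {g : α → ℝ}
    (hfg : ∀ n, Integrable (fun y => f n y * g y) μ) :
    ∫ y, wavg w N (fun n => f n y) * g y ∂μ = wavg w N fun n => ∫ y, f n y * g y ∂μ := by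
  simp only [wavg_mul]
  exact integral_wavg hfg

lemma integral_mul_wavg {f : ℕ → α → ℝ} {g : α → ℝ}
    (hfg : ∀ n, Integrable (fun y => g y * f n y) μ) :
    ∫ y, g y * wavg w N (fun n => f n y) ∂μ = wavg w N fun n => ∫ y, g y * f n y ∂μ := by
  simp only [mul_wavg]
  exact integral_wavg hfg

lemma MeasureTheory.Lp.coeFn_wavg {E : Type*} [NormedAddCommGroup E] [NormedSpace ℝ E] {p : ℝ≥0∞}
    (F : ℕ → Lp E p μ) : ⇑(wavg w N F) =ᵐ[μ] fun y => wavg w N fun n => F n y := by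
  filter_upwards [Lp.coeFn_smul (wsum w N)⁻¹ (∑ n ∈ Finset.Icc 1 N, w ((n : ℝ) / N) • F n),
    Lp.coeFn_fun_finsetSum (Finset.Icc 1 N) fun n => w ((n : ℝ) / N) • F n,
    ae_all_iff.mpr fun n : ℕ => Lp.coeFn_smul (w ((n : ℝ) / N)) (F n)] with y hsmul hsum hterm
  simp only [wavg, hsmul, Pi.smul_apply, hsum, hterm]

lemma MeasureTheory.MemLp.inner_toLp_toLp {f g : α → ℝ} (hf : MemLp f 2 μ) (hg : MemLp g 2 μ) :
    ⟪hf.toLp f, hg.toLp g⟫ = ∫ y, f y * g y ∂μ := by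
  rw [L2.inner_def]
  refine integral_congr_ae ?_
  filter_upwards [hf.coeFn_toLp, hg.coeFn_toLp] with y hfy hgy
  simp only [hfy, hgy, RCLike.inner_apply, conj_trivial, mul_comm]

lemma integrable_mul_of_abs_le [IsFiniteMeasure μ] {u v : α → ℝ} (hu : AEStronglyMeasurable u μ)
    (hv : AEStronglyMeasurable v μ) {Cu Cv : ℝ} (hCu : ∀ y, |u y| ≤ Cu) (hCv : ∀ y, |v y| ≤ Cv) :
    Integrable (fun y => u y * v y) μ :=
  (Integrable.of_bound hu Cu (ae_of_all _ hCu)).mul_bdd hv (ae_of_all _ hCv)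

lemma ae_norm_le_of_tendsto_Lp {E : Type*} [NormedAddCommGroup E] {p : ℝ≥0∞} [Fact (1 ≤ p)]
    {A : ℕ → Lp E p μ} {x : Lp E p μ} (hA : Tendsto A atTop (𝓝 x)) {C : ℝ}
    (hC : ∀ N, ∀ᵐ y ∂μ, ‖A N y‖ ≤ C) : ∀ᵐ y ∂μ, ‖x y‖ ≤ C := by
  obtain ⟨ns, -, hns⟩ := (tendstoInMeasure_of_tendsto_Lp hA).exists_seq_tendsto_ae
  filter_upwards [hns, ae_all_iff.mpr hC] with y hy hCy
  exact le_of_tendsto' hy.norm fun i => hCy (ns i)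

lemma tendsto_integral_norm_sub_of_tendsto_Lp [IsFiniteMeasure μ] {E ι : Type*}
    [NormedAddCommGroup E] {p : ℝ≥0∞} [hp : Fact (1 ≤ p)] {l : Filter ι} {A : ι → Lp E p μ}
    {x : Lp E p μ} (hA : Tendsto A l (𝓝 x)) :
    Tendsto (fun i => ∫ y, ‖A i y - x y‖ ∂μ) l (𝓝 0) := by
  rw [Lp.tendsto_Lp_iff_tendsto_eLpNorm'] at hA
  set c := μ Set.univ ^ (1 / (1 : ℝ≥0∞).toReal - 1 / p.toReal)
  have hc : c ≠ ⊤ := by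
    refine ENNReal.rpow_ne_top_of_nonneg ?_ (measure_ne_top μ _)
    rcases eq_or_ne p ⊤ with rfl | hp_top
    · simp
    · have : 1 ≤ p.toReal := by simpa using ENNReal.toReal_mono hp_top hp.out
      simpa using inv_le_one_of_one_le₀ this
  have h1 : Tendsto (fun i => eLpNorm (⇑(A i) - ⇑x) 1 μ) l (𝓝 0) := by
    refine tendsto_of_tendsto_of_tendsto_of_le_of_le tendsto_const_nhds
      (by simpa only [zero_mul] using ENNReal.Tendsto.mul_const hA (Or.inr hc))
      (fun _ => bot_le) fun i => ?_
    exact eLpNorm_le_eLpNorm_mul_rpow_measure_univ hp.out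
      ((Lp.aestronglyMeasurable _).sub (Lp.aestronglyMeasurable _))
  have h2 := (ENNReal.tendsto_toReal ENNReal.zero_ne_top).comp h1
  rw [ENNReal.toReal_zero] at h2
  refine h2.congr fun i => ?_
  rw [Function.comp_apply, eLpNorm_one_eq_lintegral_enorm]
  exact (integral_norm_eq_lintegral_enorm
    ((Lp.aestronglyMeasurable _).sub (Lp.aestronglyMeasurable _))).symm

lemma exists_measurable_abs_le_ae_eq {f : α → ℝ} (hf : AEStronglyMeasurable f μ) {C : ℝ}
    (hC : 0 ≤ C) (hfC : ∀ᵐ y ∂μ, |f y| ≤ C) :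
    ∃ g : α → ℝ, Measurable g ∧ (∀ y, |g y| ≤ C) ∧ f =ᵐ[μ] g := by
  refine ⟨fun y => max (-C) (min C (hf.mk f y)),
    measurable_const.max (measurable_const.min hf.stronglyMeasurable_mk.measurable),
    fun y => abs_le.mpr ⟨le_max_left _ _, max_le (by linarith) (min_le_left _ _)⟩, ?_⟩
  filter_upwards [hf.ae_eq_mk, hfC] with y hy hyC
  rw [← hy, min_eq_right (abs_le.mp hyC).2, max_eq_right (abs_le.mp hyC).1]

lemma tendsto_integral_mul_sub_integral_mul {ι : Type*} {l : Filter ι} {a h : ι → α → ℝ}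
    {g : α → ℝ} (ha : ∀ i, Integrable (a i) μ) (hg : Integrable g μ)
    (hh : ∀ i, AEStronglyMeasurable (h i) μ) {C : ℝ} (hC : ∀ i y, |h i y| ≤ C)
    (hlim : Tendsto (fun i => ∫ y, |a i y - g y| ∂μ) l (𝓝 0)) :
    Tendsto (fun i => ∫ y, a i y * h i y ∂μ - ∫ y, g y * h i y ∂μ) l (𝓝 0) := by
  refine squeeze_zero_norm (fun i => ?_) (by simpa using hlim.mul_const C)
  rw [← integral_sub ((ha i).mul_bdd (hh i) (ae_of_all _ (hC i)))
    (hg.mul_bdd (hh i) (ae_of_all _ (hC i))), ← integral_mul_const]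
  refine norm_integral_le_of_norm_le (((ha i).sub hg).abs.mul_const C) (ae_of_all _ fun y => ?_)
  rw [Real.norm_eq_abs, ← sub_mul, abs_mul]
  exact mul_le_mul_of_nonneg_left (hC i y) (abs_nonneg _)

lemma tendsto_integral_mul_of_tendsto_integral_abs_sub {ι : Type*} {l : Filter ι}
    {a : ι → α → ℝ} {g h : α → ℝ} (ha : ∀ i, Integrable (a i) μ) (hg : Integrable g μ)
    (hh : AEStronglyMeasurable h μ) {C : ℝ} (hC : ∀ y, |h y| ≤ C)
    (hlim : Tendsto (fun i => ∫ y, |a i y - g y| ∂μ) l (𝓝 0)) :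
    Tendsto (fun i => ∫ y, a i y * h y ∂μ) l (𝓝 (∫ y, g y * h y ∂μ)) :=
  tendsto_sub_nhds_zero_iff.mp <|
    tendsto_integral_mul_sub_integral_mul (h := fun _ => h) ha hg (fun _ => hh) (fun _ => hC) hlim

end Integration

section Correlation

variable {α : Type*} [MeasurableSpace α]

/-- General-measure form of strong (S)-convergence of `(f n)_{n ≥ 1}`, with `f n` playing the role
of `b ∘ U_n`. -/
def CorrelationConvergent (μ : Measure α) (f : ℕ → α → ℝ) : Prop :=
  ∃ ℓ : ℕ → ℝ,
    (∀ w, IsWeight w → ∀ m : ℕ, 1 ≤ m →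
      Tendsto (fun N => wavg w N fun n => ∫ y, f n y * f m y ∂μ) atTop (𝓝 (ℓ m))) ∧
    ∀ w, IsWeight w → ∃ L : ℝ,
      Tendsto (fun N => wavg w N fun n => wavg w N fun m => ∫ y, f n y * f m y ∂μ) atTop (𝓝 L) ∧
      Tendsto (fun K => wavg w K ℓ) atTop (𝓝 L)

def WeightedL1Convergent (μ : Measure α) (f : ℕ → α → ℝ) : Prop :=
  ∃ bbar : α → ℝ, Measurable bbar ∧ (∃ C : ℝ, ∀ y, |bbar y| ≤ C) ∧
    ∀ w, IsWeight w →
      Tendsto (fun N => ∫ y, |wavg w N (fun n => f n y) - bbar y| ∂μ) atTop (𝓝 0)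

variable {μ : Measure α} [IsFiniteMeasure μ] {f : ℕ → α → ℝ} {C : ℝ}

theorem CorrelationConvergent.weightedL1Convergent (hf : ∀ n, Measurable (f n))
    (hC : ∀ n y, |f n y| ≤ C) (h : CorrelationConvergent μ f) : WeightedL1Convergent μ f := by
  obtain ⟨ℓ, h1, h2⟩ := h
  have hL2 : ∀ n, MemLp (f n) 2 μ := fun n =>
    MemLp.of_bound (hf n).aestronglyMeasurable C (ae_of_all _ (hC n))
  set F : ℕ → Lp ℝ 2 μ := fun n => (hL2 n).toLp (f n)
  let A : {w // IsWeight w} → ℕ → Lp ℝ 2 μ := fun w N => wavg w N F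
  have hAF : ∀ w N m, ⟪A w N, F m⟫ = wavg w N fun n => ∫ y, f n y * f m y ∂μ := fun w N m => by
    simp only [A, F, inner_wavg_left, MemLp.inner_toLp_toLp]
  have hinner : ∀ w w' K, Tendsto (fun N => ⟪A w N, A w' K⟫) atTop (𝓝 (wavg w' K ℓ)) :=
    fun w w' K => by
      simp only [A, inner_wavg_right (wavg _ _ F)]
      exact tendsto_wavg fun m hm =>
        (h1 w w.2 m (Finset.mem_Icc.mp hm).1).congr fun N => (hAF w N m).symm
  have hnorm : ∀ w, ∃ L, Tendsto (fun N => ‖A w N‖ ^ 2) atTop (𝓝 L) ∧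
      Tendsto (fun K => wavg w K ℓ) atTop (𝓝 L) := fun w => by
    obtain ⟨L, hL, hG⟩ := h2 w w.2
    refine ⟨L, hL.congr fun N => ?_, hG⟩
    simp only [A, ← real_inner_self_eq_norm_sq]
    rw [inner_wavg_left]
    simp only [F, inner_wavg_right, MemLp.inner_toLp_toLp]
  have : Nonempty {w // IsWeight w} := ⟨⟨_, isWeight_one⟩⟩
  obtain ⟨x, hx⟩ := exists_tendsto_of_tendsto_inner hinner hnorm
  have hA : ∀ w N, A w N =ᵐ[μ] fun y => wavg w N fun n => f n y := fun w N => by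
    filter_upwards [Lp.coeFn_wavg (w := w.1) (N := N) F,
      ae_all_iff.mpr fun n => (hL2 n).coeFn_toLp] with y hy hFy
    simp only [A, hy, F, hFy]
  have hx_bdd : ∀ᵐ y ∂μ, |x y| ≤ max C 0 := by
    refine ae_norm_le_of_tendsto_Lp (hx ⟨_, isWeight_one⟩) fun N => ?_
    filter_upwards [hA ⟨_, isWeight_one⟩ N] with y hy
    rw [hy, Real.norm_eq_abs]
    exact (abs_wavg_le isWeight_one fun n => hC n y).trans (le_max_left _ _)
  obtain ⟨bbar, hbm, hbC, hxb⟩ :=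
    exists_measurable_abs_le_ae_eq (Lp.aestronglyMeasurable x) (le_max_right C 0) hx_bdd
  refine ⟨bbar, hbm, ⟨_, hbC⟩, fun w hw => ?_⟩
  refine (tendsto_integral_norm_sub_of_tendsto_Lp (hx ⟨w, hw⟩)).congr fun N =>
    integral_congr_ae ?_
  filter_upwards [hA ⟨w, hw⟩ N, hxb] with y hy hxy
  rw [hy, hxy, Real.norm_eq_abs]


theorem WeightedL1Convergent.correlationConvergent (hf : ∀ n, Measurable (f n))
    (hC : ∀ n y, |f n y| ≤ C) (h : WeightedL1Convergent μ f) : CorrelationConvergent μ f := by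
  obtain ⟨bbar, hbm, ⟨C', hC'⟩, hconv⟩ := h
  have hfm : ∀ n, AEStronglyMeasurable (f n) μ := fun n => (hf n).aestronglyMeasurable
  have hbm' : AEStronglyMeasurable bbar μ := hbm.aestronglyMeasurable
  have ham : ∀ w N, AEStronglyMeasurable (fun y => wavg w N fun n => f n y) μ := fun w N => by
    simp only [wavg]
    fun_prop
  have haC : ∀ w, IsWeight w → ∀ N y, |wavg w N fun n => f n y| ≤ C := fun w hw N y =>
    abs_wavg_le hw fun n => hC n y
  have hpair : ∀ w, IsWeight w → ∀ {h : α → ℝ}, AEStronglyMeasurable h μ → ∀ {D : ℝ},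
      (∀ y, |h y| ≤ D) → Tendsto (fun N => ∫ y, (wavg w N fun n => f n y) * h y ∂μ) atTop
        (𝓝 (∫ y, bbar y * h y ∂μ)) := fun w hw h hh D hD =>
    tendsto_integral_mul_of_tendsto_integral_abs_sub
      (fun N => Integrable.of_bound (ham w N) C (ae_of_all _ (haC w hw N)))
      (Integrable.of_bound hbm' C' (ae_of_all _ hC')) hh hD (hconv w hw)
  have hbar : ∀ w, IsWeight w → Tendsto (fun N => ∫ y, bbar y * wavg w N (fun n => f n y) ∂μ)
      atTop (𝓝 (∫ y, bbar y * bbar y ∂μ)) := fun w hw =>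
    (hpair w hw hbm' hC').congr fun N => integral_congr_ae (ae_of_all _ fun y => mul_comm _ _)
  refine ⟨fun m => ∫ y, bbar y * f m y ∂μ, fun w hw m _ => ?_, fun w hw =>
    ⟨∫ y, bbar y * bbar y ∂μ, ?_, ?_⟩⟩
  · exact (hpair w hw (hfm m) (hC m)).congr fun N =>
      integral_wavg_mul fun n => integrable_mul_of_abs_le (hfm n) (hfm m) (hC n) (hC m)
  · have hsq := tendsto_integral_mul_sub_integral_mul (h := fun N y => wavg w N fun n => f n y)
      (fun N => Integrable.of_bound (ham w N) C (ae_of_all _ (haC w hw N)))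
      (Integrable.of_bound hbm' C' (ae_of_all _ hC')) (ham w) (haC w hw) (hconv w hw)
    have hlim := hsq.add (hbar w hw)
    rw [zero_add] at hlim
    refine hlim.congr fun N => ?_
    rw [sub_add_cancel, integral_wavg_mul fun n =>
      integrable_mul_of_abs_le (hfm n) (ham w N) (hC n) (haC w hw N)]
    exact congrArg (wavg w N) <| funext fun n =>
      integral_mul_wavg fun m => integrable_mul_of_abs_le (hfm n) (hfm m) (hC n) (hC m)
  · exact (hbar w hw).congr fun K =>
      integral_mul_wavg fun m => integrable_mul_of_abs_le hbm' (hfm m) hC' (hC m)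

theorem correlationConvergent_iff_weightedL1Convergent (hf : ∀ n, Measurable (f n))
    (hC : ∀ n y, |f n y| ≤ C) : CorrelationConvergent μ f ↔ WeightedL1Convergent μ f :=
  ⟨fun h => h.weightedL1Convergent hf hC, fun h => h.correlationConvergent hf hC⟩

end Correlation

theorem stmt4_general {M D : ℕ} (Q : Set (Fin M → ℝ))
    (hQfin : volume Q < ⊤)
    (U : ℕ → (Fin M → ℝ) → EuclideanSpace ℝ (Fin D)) (hU : ∀ n, Measurable (U n)) :
    StronglySConv Q U ↔
      (∀ b : EuclideanSpace ℝ (Fin D) → ℝ, Continuous b → HasCompactSupport b →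
        ∃ bbar : (Fin M → ℝ) → ℝ, Measurable bbar ∧ (∃ C : ℝ, ∀ y, |bbar y| ≤ C) ∧
          ∀ w : ℝ → ℝ, IsWeight w →
            Tendsto (fun N : ℕ =>
                ∫ y in Q, |(wsum w N)⁻¹ *
                    (∑ n ∈ Finset.Icc 1 N, w ((n : ℝ) / (N : ℝ)) * b (U n y)) - bbar y|)
              atTop (𝓝 0)) := by
  have : IsFiniteMeasure (volume.restrict Q) := ⟨by simpa using hQfin⟩
  refine forall₃_congr fun b hb hbs => ?_
  obtain ⟨C, hC⟩ := hbs.exists_bound_of_continuous hb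
  simp only [inv_sq_mul_sum_sum_eq_wavg_wavg]
  exact correlationConvergent_iff_weightedL1Convergent (f := fun n y => b (U n y))
    (fun n => hb.measurable.comp (hU n)) fun n y => by simpa using hC (U n y)

/-- Theorem 2.1 (ii): `(U_n)` is strongly (S)-convergent iff for every
`b ∈ C_c(ℝ^D)` there exists `b̄ ∈ L^∞(Q)` such that for every `w ∈ W` the weighted averages
`(1/w_N) ∑_{n=1}^N w(n/N) b(U_n)` converge strongly in `L¹(Q)` to `b̄`, the limit being
independent of `w`. -/
theorem stmt4 {M D : ℕ} (Q : Set (Fin M → ℝ)) (hQm : MeasurableSet Q)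
    (hQfin : volume Q < ⊤)
    (U : ℕ → (Fin M → ℝ) → EuclideanSpace ℝ (Fin D)) (hU : ∀ n, Measurable (U n)) :
    StronglySConv Q U ↔
      (∀ b : EuclideanSpace ℝ (Fin D) → ℝ, Continuous b → HasCompactSupport b →
        ∃ bbar : (Fin M → ℝ) → ℝ, Measurable bbar ∧ (∃ C : ℝ, ∀ y, |bbar y| ≤ C) ∧
          ∀ w : ℝ → ℝ, IsWeight w →
            Tendsto (fun N : ℕ =>
                ∫ y in Q, |(wsum w N)⁻¹ *
                    (∑ n ∈ Finset.Icc 1 N, w ((n : ℝ) / (N : ℝ)) * b (U n y)) - bbar y|)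
              atTop (𝓝 0)) :=
  stmt4_general Q hQfin U hU
end
end

section
/- Suppose (U_n)_{n≥1} is weakly asymptotically stationary, i.e., for every b ∈ C_c(ℝ^D): (A2) for every fixed m, the limit lim_{N→∞} (1/N) Σ_{n=1}^N ∫_Q b(U_n) b(U_m) dy exists; and (A3) there exists a function ω(b,·) with ω(b,k) → 0 as k → ∞ such that |∫_Q [b(U_{k_1}) b(U_{k_2}) − b(U_{k_1+n}) b(U_{k_2+n})] dy| ≤ ω(b,k) for all 1 ≤ k ≤ k_1 ≤ k_2 and all n ≥ 0. Then (U_n) is weakly (S)-convergent; in particular, for every b ∈ C_c(ℝ^D) there exists \bar{b} ∈ L^∞(Q) such that (1/N) Σ_{n=1}^N b(U_n) → \bar{b} strongly in L¹(Q) as N → ∞. -/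
/-!
Write `a n m = ∫_Q b(U_n) b(U_m)` and `ℓ m` for the Cesàro limit of the column `a · m`.
By (A3), for indices `≥ k` the kernel `a` is within `ω k` of the Toeplitz kernel
`(n, m) ↦ a k (k + |n - m|)`, whose Cesàro limit is `ℓ k`. This gives `|ℓ m - ℓ k| ≤ ω k`
for `m ≥ k`, so `ℓ → L`, and it shows that the double means `(N N')⁻¹ ∑_{n ≤ N, m ≤ N'} a n m`
tend to `L` as `N, N' → ∞` jointly. These double means are the inner products `⟪S_N, S_N'⟫`
in `L²(Q)` of the Cesàro means `S_N = N⁻¹ ∑_{n ≤ N} b(U_n)`, hence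
`‖S_N - S_N'‖² → L - 2L + L = 0`: the means converge in `L²(Q)`, hence in `L¹(Q)` because
`Q` has finite measure. Clamping the limit to the range of `b` makes it bounded without
increasing its `L¹` distance to the means.
-/

open MeasureTheory Filter Topology

noncomputable section

def WeaklySConv {M D : ℕ} (Q : Set (Fin M → ℝ))
    (U : ℕ → (Fin M → ℝ) → EuclideanSpace ℝ (Fin D)) : Prop :=
  ∀ b : EuclideanSpace ℝ (Fin D) → ℝ, Continuous b → HasCompactSupport b →
    ∃ ℓ : ℕ → ℝ,
      (∀ m : ℕ, 1 ≤ m →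
        Tendsto (fun N : ℕ => (N : ℝ)⁻¹ *
            ∑ n ∈ Finset.Icc 1 N, ∫ y in Q, b (U n y) * b (U m y)) atTop (𝓝 (ℓ m))) ∧
      ∃ L : ℝ,
        Tendsto (fun N : ℕ => ((N : ℝ) ^ 2)⁻¹ *
            ∑ n ∈ Finset.Icc 1 N, ∑ m ∈ Finset.Icc 1 N, ∫ y in Q, b (U n y) * b (U m y))
          atTop (𝓝 L) ∧
        Tendsto (fun K : ℕ => (K : ℝ)⁻¹ * ∑ m ∈ Finset.Icc 1 K, ℓ m) atTop (𝓝 L)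

open Finset

def cesaroMean (u : ℕ → ℝ) (N : ℕ) : ℝ := (N : ℝ)⁻¹ * ∑ n ∈ Icc 1 N, u n

lemma cesaroMean_sub (u v : ℕ → ℝ) (N : ℕ) :
    cesaroMean (fun n => u n - v n) N = cesaroMean u N - cesaroMean v N := by
  simp only [cesaroMean, sum_sub_distrib, mul_sub]

lemma cesaroMean_sub_const (u : ℕ → ℝ) (c : ℝ) {N : ℕ} (hN : N ≠ 0) :
    cesaroMean (fun n => u n - c) N = cesaroMean u N - c := by
  have : (N : ℝ) ≠ 0 := Nat.cast_ne_zero.2 hN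
  simp only [cesaroMean, sum_sub_distrib, sum_const, Nat.card_Icc, add_tsub_cancel_right,
    nsmul_eq_mul]
  field_simp

lemma cesaroMean_sub_eq_div {u : ℕ → ℝ} {c : ℝ} {N : ℕ} (hN : (N : ℝ) ≠ 0) :
    cesaroMean u N - c = (∑ n ∈ Icc 1 N, u n - c * N) / N := by
  rw [cesaroMean]
  field_simp

lemma abs_sum_Icc_le {u : ℕ → ℝ} {C c : ℝ} {k N : ℕ} (hc : 0 ≤ c) (hC : ∀ n, |u n| ≤ C)
    (hk : ∀ n, k ≤ n → n ≤ N → |u n| ≤ c) :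
    |∑ n ∈ Icc 1 N, u n| ≤ c * N + C * k := by
  have hC0 : 0 ≤ C := (abs_nonneg _).trans (hC 0)
  have h_low : ∑ n ∈ Icc 1 N with n < k, |u n| ≤ C * k := by
    calc ∑ n ∈ Icc 1 N with n < k, |u n| ≤ #{n ∈ Icc 1 N | n < k} • C :=
          sum_le_card_nsmul _ _ _ fun n _ => hC n
      _ ≤ k • C := by
          gcongr
          exact (card_le_card fun n hn => mem_range.2 (mem_filter.1 hn).2).trans
            (card_range k).le
      _ = C * k := by rw [nsmul_eq_mul, mul_comm]
  have h_high : ∑ n ∈ Icc 1 N with ¬n < k, |u n| ≤ c * N := by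
    calc ∑ n ∈ Icc 1 N with ¬n < k, |u n| ≤ #{n ∈ Icc 1 N | ¬n < k} • c :=
          sum_le_card_nsmul _ _ _ fun n hn => by
            simp only [mem_filter, mem_Icc, not_lt] at hn
            exact hk n hn.2 hn.1.2
      _ ≤ N • c := by
          gcongr
          exact (card_filter_le _ _).trans (by simp)
      _ = c * N := by rw [nsmul_eq_mul, mul_comm]
  calc |∑ n ∈ Icc 1 N, u n| ≤ ∑ n ∈ Icc 1 N, |u n| := abs_sum_le_sum_abs _ _
    _ = _ := (sum_filter_add_sum_filter_not _ (· < k) _).symm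
    _ ≤ c * N + C * k := by linarith

lemma abs_cesaroMean_le {u : ℕ → ℝ} {C c : ℝ} {k N : ℕ} (hc : 0 ≤ c) (hC : ∀ n, |u n| ≤ C)
    (hk : ∀ n, k ≤ n → n ≤ N → |u n| ≤ c) :
    |cesaroMean u N| ≤ c + C * k / N := by
  rcases Nat.eq_zero_or_pos N with rfl | hN
  · simpa [cesaroMean] using hc
  have hN' : (0 : ℝ) < N := Nat.cast_pos.2 hN
  rw [cesaroMean, abs_mul, abs_inv, Nat.abs_cast, inv_mul_le_iff₀ hN']
  calc |∑ n ∈ Icc 1 N, u n| ≤ c * N + C * k := abs_sum_Icc_le hc hC hk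
    _ = N * (c + C * k / N) := by field_simp

lemma abs_cesaroMean_le_of_abs_le {u : ℕ → ℝ} {C : ℝ} (hC : ∀ n, |u n| ≤ C) (N : ℕ) :
    |cesaroMean u N| ≤ C := by
  simpa using abs_cesaroMean_le (k := 0) (N := N) ((abs_nonneg _).trans (hC 0)) hC
    fun n _ _ => hC n

lemma abs_le_of_tendsto_cesaroMean {u : ℕ → ℝ} {C c l : ℝ} {k : ℕ} (hc : 0 ≤ c)
    (hC : ∀ n, |u n| ≤ C) (hk : ∀ n, k ≤ n → |u n| ≤ c)
    (h : Tendsto (cesaroMean u) atTop (𝓝 l)) : |l| ≤ c := by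
  have hbound : Tendsto (fun N : ℕ => c + C * k / N) atTop (𝓝 c) := by
    simpa using tendsto_const_nhds.add (tendsto_const_div_atTop_nhds_zero_nat (C * k))
  exact le_of_tendsto_of_tendsto' h.abs hbound fun N =>
    abs_cesaroMean_le hc hC fun n hn _ => hk n hn

lemma sum_Icc_comp_add_one (u : ℕ → ℝ) (N : ℕ) :
    ∑ n ∈ Icc 1 N, u (n + 1) = ∑ n ∈ Icc 1 (N + 1), u n - u 1 := by
  induction N with
  | zero => simp
  | succ N ih =>
    rw [sum_Icc_succ_top (b := N) (by omega), ih, sum_Icc_succ_top (b := N + 1) (by omega)]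
    ring

lemma Filter.Tendsto.cesaroMean_comp_add_one {u : ℕ → ℝ} {l : ℝ}
    (h : Tendsto (cesaroMean u) atTop (𝓝 l)) :
    Tendsto (cesaroMean fun n => u (n + 1)) atTop (𝓝 l) := by
  have hshift : Tendsto (fun N : ℕ => (1 + 1 / N) * cesaroMean u (N + 1) - u 1 / N)
      atTop (𝓝 ((1 + 0) * l - 0)) :=
    ((tendsto_const_nhds.add (tendsto_const_div_atTop_nhds_zero_nat 1)).mul
      (h.comp (tendsto_add_atTop_nat 1))).sub (tendsto_const_div_atTop_nhds_zero_nat (u 1))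
  rw [add_zero, one_mul, sub_zero] at hshift
  refine hshift.congr' ?_
  filter_upwards [eventually_ne_atTop 0] with N hN
  have : (N : ℝ) ≠ 0 := Nat.cast_ne_zero.2 hN
  simp only [cesaroMean, sum_Icc_comp_add_one, Nat.cast_add, Nat.cast_one]
  field_simp

lemma Filter.Tendsto.cesaroMean_comp_add {u : ℕ → ℝ} {l : ℝ}
    (h : Tendsto (cesaroMean u) atTop (𝓝 l)) (r : ℕ) :
    Tendsto (cesaroMean fun n => u (n + r)) atTop (𝓝 l) := by
  induction r generalizing u with
  | zero => exact h
  | succ r ih => simpa only [add_assoc, add_comm 1 r] using ih h.cesaroMean_comp_add_one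

lemma sum_Icc_one_eq_sum_range (u : ℕ → ℝ) (N : ℕ) :
    ∑ n ∈ Icc 1 N, u n = ∑ i ∈ range N, u (i + 1) := by
  induction N with
  | zero => simp
  | succ N ih => rw [sum_Icc_succ_top (by omega), ih, sum_range_succ]

lemma Filter.Tendsto.cesaroMean {u : ℕ → ℝ} {l : ℝ} (h : Tendsto u atTop (𝓝 l)) :
    Tendsto (cesaroMean u) atTop (𝓝 l) := by
  refine (h.comp (tendsto_add_atTop_nat 1)).cesaro.congr fun N => ?_
  rw [_root_.cesaroMean, sum_Icc_one_eq_sum_range]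
  rfl

lemma exists_abs_sum_Icc_sub_le {g : ℕ → ℝ} {c : ℝ} (hg : Tendsto (cesaroMean g) atTop (𝓝 c))
    {ε : ℝ} (hε : 0 < ε) : ∃ C, ∀ T : ℕ, |∑ d ∈ Icc 1 T, g d - c * T| ≤ ε * T + C := by
  obtain ⟨T₀, hT₀⟩ := eventually_atTop.1 <|
    (hg.sub_const c).abs.eventually (ge_mem_nhds (a := ε) (by simpa using hε))
  refine ⟨∑ T ∈ range T₀, |∑ d ∈ Icc 1 T, g d - c * T|, fun T => ?_⟩
  rcases lt_or_ge T T₀ with hT | hT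
  · have hle := single_le_sum (f := fun T => |∑ d ∈ Icc 1 T, g d - c * T|)
      (fun _ _ => abs_nonneg _) (mem_range.2 hT)
    have : 0 ≤ ε * T := by positivity
    linarith
  · have hC : 0 ≤ ∑ T ∈ range T₀, |∑ d ∈ Icc 1 T, g d - c * T| :=
      sum_nonneg fun _ _ => abs_nonneg _
    have hsum : ∑ d ∈ Icc 1 T, g d - c * T = T * (cesaroMean g T - c) := by
      rcases eq_or_ne T 0 with rfl | hT0
      · simp
      · rw [cesaroMean_sub_eq_div (Nat.cast_ne_zero.2 hT0)]
        field_simp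
    rw [hsum, abs_mul, Nat.abs_cast]
    nlinarith [hT₀ T hT, (Nat.cast_nonneg T : (0 : ℝ) ≤ T)]

lemma sum_Icc_dist (g : ℕ → ℝ) {n N : ℕ} (hn : 1 ≤ n) (hnN : n ≤ N) :
    ∑ m ∈ Icc 1 N, g (n.dist m) = ∑ d ∈ Icc 1 (n - 1), g d + g 0 + ∑ d ∈ Icc 1 (N - n), g d := by
  obtain ⟨p, rfl⟩ : ∃ p, n = p + 1 := ⟨n - 1, by omega⟩
  have hIoc : ∀ T, Icc 1 T = Ioc 0 T := fun T => Icc_add_one_left_eq_Ioc 0 T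
  have hlow : ∑ m ∈ Ioc 0 p, g ((p + 1).dist m) = ∑ d ∈ Ioc 0 p, g d := by
    refine sum_nbij' (fun m => p + 1 - m) (fun d => p + 1 - d) ?_ ?_ ?_ ?_ ?_ <;>
      simp only [mem_Ioc] <;> intro x hx
    all_goals first | omega | (congr 1; simp only [Nat.dist]; omega)
  have hhigh : ∑ m ∈ Ioc (p + 1) N, g ((p + 1).dist m) = ∑ d ∈ Ioc 0 (N - (p + 1)), g d := by
    refine sum_nbij' (fun m => m - (p + 1)) (fun d => d + (p + 1)) ?_ ?_ ?_ ?_ ?_ <;>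
      simp only [mem_Ioc] <;> intro x hx
    all_goals first | omega | (congr 1; simp only [Nat.dist]; omega)
  rw [hIoc, ← sum_Ioc_consecutive _ (Nat.zero_le (p + 1)) hnN, sum_Ioc_succ_top (Nat.zero_le p),
    Nat.dist_self, hlow, hhigh, hIoc, hIoc, add_tsub_cancel_right]

lemma exists_abs_cesaroMean_dist_sub_le {g : ℕ → ℝ} {c : ℝ}
    (hg : Tendsto (cesaroMean g) atTop (𝓝 c)) {ε : ℝ} (hε : 0 < ε) :
    ∃ C, 0 ≤ C ∧ ∀ n N : ℕ, 1 ≤ n → n ≤ N →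
      |cesaroMean (fun m => g (n.dist m)) N - c| ≤ ε + C / N := by
  obtain ⟨C₀, hC₀⟩ := exists_abs_sum_Icc_sub_le hg hε
  have hC₀0 : 0 ≤ C₀ := by simpa using hC₀ 0
  refine ⟨2 * C₀ + |g 0 - c|, by positivity, fun n N hn hnN => ?_⟩
  have hN : (0 : ℝ) < N := Nat.cast_pos.2 (by omega)
  have hrow : |∑ m ∈ Icc 1 N, g (n.dist m) - c * N| ≤ ε * N + (2 * C₀ + |g 0 - c|) := by
    have hlow := abs_le.1 (hC₀ (n - 1))
    have hhigh := abs_le.1 (hC₀ (N - n))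
    rw [Nat.cast_sub hn, Nat.cast_one] at hlow
    rw [Nat.cast_sub hnN] at hhigh
    have hmid := abs_le.1 (le_refl |g 0 - c|)
    rw [sum_Icc_dist g hn hnN, abs_le]
    constructor <;> linarith
  rw [cesaroMean_sub_eq_div hN.ne', abs_div, Nat.abs_cast, div_le_iff₀ hN]
  calc _ ≤ ε * N + (2 * C₀ + |g 0 - c|) := hrow
    _ = _ := by field_simp

lemma exists_tendsto_of_abs_sub_le {ℓ ω : ℕ → ℝ} (hω : Tendsto ω atTop (𝓝 0))
    (h : ∀ k m, 1 ≤ k → k ≤ m → |ℓ m - ℓ k| ≤ ω k) :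
    ∃ L, Tendsto ℓ atTop (𝓝 L) ∧ ∀ k, 1 ≤ k → |ℓ k - L| ≤ ω k := by
  have hcauchy : CauchySeq fun n => ℓ (n + 1) := by
    refine cauchySeq_of_le_tendsto_0 (fun N => 2 * ω (N + 1)) (fun n m N hn hm => ?_) ?_
    · rw [Real.dist_eq]
      have h1 := h (N + 1) (n + 1) (by omega) (by omega)
      have h2 := h (N + 1) (m + 1) (by omega) (by omega)
      have h3 := abs_sub_le (ℓ (n + 1)) (ℓ (N + 1)) (ℓ (m + 1))
      rw [abs_sub_comm (ℓ (N + 1))] at h3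
      linarith
    · simpa using (hω.comp (tendsto_add_atTop_nat 1)).const_mul 2
  obtain ⟨L, hL₁⟩ := cauchySeq_tendsto_of_complete hcauchy
  have hL : Tendsto ℓ atTop (𝓝 L) := (tendsto_add_atTop_iff_nat 1).1 hL₁
  refine ⟨L, hL, fun k hk => le_of_tendsto (tendsto_const_nhds.sub hL).abs ?_⟩
  filter_upwards [eventually_ge_atTop k] with m hm
  rw [abs_sub_comm]
  exact h k m hk hm

def doubleMean (a : ℕ → ℕ → ℝ) (N N' : ℕ) : ℝ := cesaroMean (fun n => cesaroMean (a n) N') N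

lemma doubleMean_comm {a : ℕ → ℕ → ℝ} (hs : ∀ n m, a n m = a m n) (N N' : ℕ) :
    doubleMean a N N' = doubleMean a N' N := by
  simp only [doubleMean, cesaroMean, mul_sum]
  rw [sum_comm]
  refine sum_congr rfl fun m _ => sum_congr rfl fun n _ => ?_
  rw [hs]
  ring

lemma doubleMean_self (a : ℕ → ℕ → ℝ) (N : ℕ) :
    doubleMean a N N = ((N : ℝ) ^ 2)⁻¹ * ∑ n ∈ Icc 1 N, ∑ m ∈ Icc 1 N, a n m := by
  simp only [doubleMean, cesaroMean, ← mul_sum, sq, mul_inv]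
  ring

lemma cesaroMean_mul_cesaroMean (u v : ℕ → ℝ) (N N' : ℕ) :
    cesaroMean u N * cesaroMean v N' = doubleMean (fun n m => u n * v m) N N' := by
  simp only [doubleMean, cesaroMean, ← mul_sum, ← sum_mul]
  ring

/-- Condition (A3) on the correlations `a n m = ∫ b(U_n) b(U_m)`, with modulus `ω`. -/
def AsympStationary (a : ℕ → ℕ → ℝ) (ω : ℕ → ℝ) : Prop :=
  ∀ k k₁ k₂ : ℕ, 1 ≤ k → k ≤ k₁ → k₁ ≤ k₂ → ∀ n : ℕ, |a k₁ k₂ - a (k₁ + n) (k₂ + n)| ≤ ω k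

namespace AsympStationary

variable {a : ℕ → ℕ → ℝ} {ω ℓ : ℕ → ℝ} {B : ℝ}

lemma nonneg (h : AsympStationary a ω) {k : ℕ} (hk : 1 ≤ k) : 0 ≤ ω k := by
  simpa using h k k k hk le_rfl le_rfl 0

lemma abs_sub_dist_le (h : AsympStationary a ω) (hs : ∀ n m, a n m = a m n) {k n m : ℕ}
    (hk : 1 ≤ k) (hn : k ≤ n) (hm : k ≤ m) : |a n m - a k (k + n.dist m)| ≤ ω k := by
  wlog hnm : n ≤ m generalizing n m
  · rw [hs, Nat.dist_comm]
    exact this hm hn (le_of_not_ge hnm)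
  have hshift := h k k (k + (m - n)) hk le_rfl (by omega) (n - k)
  rw [show k + (n - k) = n by omega, show k + (m - n) + (n - k) = m by omega] at hshift
  rw [Nat.dist_eq_sub_of_le hnm, abs_sub_comm]
  exact hshift

lemma abs_limit_sub_le (h : AsympStationary a ω) (hB : ∀ n m, |a n m| ≤ B)
    (hℓ : ∀ m, 1 ≤ m → Tendsto (cesaroMean (a m)) atTop (𝓝 (ℓ m))) {k m : ℕ}
    (hk : 1 ≤ k) (hkm : k ≤ m) : |ℓ m - ℓ k| ≤ ω k := by
  have hdiff := ((hℓ m (hk.trans hkm)).cesaroMean_comp_add (m - k)).sub (hℓ k hk)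
  simp_rw [← cesaroMean_sub] at hdiff
  refine abs_le_of_tendsto_cesaroMean (h.nonneg hk) (C := 2 * B) (k := k) (fun n => ?_)
    (fun n hn => ?_) hdiff
  · linarith [abs_sub (a m (n + (m - k))) (a k n), hB m (n + (m - k)), hB k n]
  · have hshift := h k k n hk le_rfl hn (m - k)
    rwa [show k + (m - k) = m by omega, abs_sub_comm] at hshift

/-- Rows `n ≥ k` are within `ω k` of the Toeplitz row `m ↦ a k (k + |n - m|)`, whose
Cesàro means converge to `c` uniformly in `n`. -/
lemma exists_abs_cesaroMean_sub_le (h : AsympStationary a ω) (hs : ∀ n m, a n m = a m n)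
    (hB : ∀ n m, |a n m| ≤ B) {k : ℕ} {c : ℝ} (hk : 1 ≤ k)
    (hc : Tendsto (cesaroMean (a k)) atTop (𝓝 c)) {ε : ℝ} (hε : 0 < ε) :
    ∃ C, 0 ≤ C ∧ ∀ n N : ℕ, k ≤ n → n ≤ N → |cesaroMean (a n) N - c| ≤ ω k + ε + C / N := by
  have htoeplitz : Tendsto (cesaroMean fun d => a k (k + d)) atTop (𝓝 c) := by
    simpa only [add_comm _ k] using hc.cesaroMean_comp_add k
  obtain ⟨C, hC0, hC⟩ := exists_abs_cesaroMean_dist_sub_le htoeplitz hε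
  have hB0 : 0 ≤ B := (abs_nonneg _).trans (hB 0 0)
  refine ⟨C + 2 * B * k, by positivity, fun n N hkn hnN => ?_⟩
  have happrox : |cesaroMean (fun m => a n m - a k (k + n.dist m)) N| ≤ ω k + 2 * B * k / N :=
    abs_cesaroMean_le (h.nonneg hk)
      (fun m => by linarith [abs_sub (a n m) (a k (k + n.dist m)), hB n m, hB k (k + n.dist m)])
      (fun m hkm _ => h.abs_sub_dist_le hs hk hkn hkm)
  have hrow := hC n N (hk.trans hkn) hnN
  rw [cesaroMean_sub] at happrox
  rw [add_div]
  linarith [abs_sub_le (cesaroMean (a n) N) (cesaroMean (fun m => a k (k + n.dist m)) N) c]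

lemma exists_abs_doubleMean_sub_le (h : AsympStationary a ω) (hs : ∀ n m, a n m = a m n)
    (hB : ∀ n m, |a n m| ≤ B) {k : ℕ} {c : ℝ} (hk : 1 ≤ k)
    (hc : Tendsto (cesaroMean (a k)) atTop (𝓝 c)) {ε : ℝ} (hε : 0 < ε) :
    ∃ C, ∀ N N' : ℕ, 1 ≤ N → N ≤ N' → |doubleMean a N N' - c| ≤ ω k + ε + C / N := by
  obtain ⟨C, hC0, hC⟩ := h.exists_abs_cesaroMean_sub_le hs hB hk hc hε
  have hcB : |c| ≤ B := abs_le_of_tendsto_cesaroMean ((abs_nonneg _).trans (hB 0 0)) (k := 0)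
    (fun n => hB k n) (fun n _ => hB k n) hc
  refine ⟨C + 2 * B * k, fun N N' hN hNN' => ?_⟩
  have hN0 : (0 : ℝ) < N := Nat.cast_pos.2 hN
  have hCN : C / N' ≤ C / N := div_le_div_of_nonneg_left hC0 hN0 (Nat.cast_le.2 hNN')
  have hrows := abs_cesaroMean_le (c := ω k + ε + C / N') (C := 2 * B) (k := k) (N := N)
    (u := fun n => cesaroMean (a n) N' - c) (by have := h.nonneg hk; positivity)
    (fun n => by linarith [abs_sub (cesaroMean (a n) N') c,
      abs_cesaroMean_le_of_abs_le (hB n) N'])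
    (fun n hkn hnN => hC n N' hkn (hnN.trans hNN'))
  rw [cesaroMean_sub_const _ _ (by omega)] at hrows
  rw [doubleMean, add_div]
  linarith

theorem exists_tendsto_doubleMean (h : AsympStationary a ω) (hω : Tendsto ω atTop (𝓝 0))
    (hs : ∀ n m, a n m = a m n) (hB : ∀ n m, |a n m| ≤ B)
    (hℓ : ∀ m, 1 ≤ m → Tendsto (cesaroMean (a m)) atTop (𝓝 (ℓ m))) :
    ∃ L, Tendsto ℓ atTop (𝓝 L) ∧
      Tendsto (fun p : ℕ × ℕ => doubleMean a p.1 p.2) atTop (𝓝 L) := by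
  obtain ⟨L, hL, hℓL⟩ :=
    exists_tendsto_of_abs_sub_le hω fun k m hk hkm => h.abs_limit_sub_le hB hℓ hk hkm
  refine ⟨L, hL, Metric.tendsto_nhds.2 fun δ hδ => ?_⟩
  obtain ⟨k, hωk, hk⟩ :=
    ((hω.eventually (gt_mem_nhds (by positivity : 0 < δ / 4))).and (eventually_ge_atTop 1)).exists
  obtain ⟨C, hC⟩ := h.exists_abs_doubleMean_sub_le hs hB hk (hℓ k hk) (by positivity : 0 < δ / 4)
  obtain ⟨N₀, hN₀⟩ := eventually_atTop.1 <|
    (tendsto_const_div_atTop_nhds_zero_nat C).eventually (gt_mem_nhds (by positivity : 0 < δ / 4))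
  have hclose : ∀ N N', max N₀ 1 ≤ N → N ≤ N' → dist (doubleMean a N N') L < δ := by
    intro N N' hN hNN'
    have h1 := hC N N' (le_of_max_le_right hN) hNN'
    have h2 := hN₀ N (le_of_max_le_left hN)
    have h3 := hℓL k hk
    rw [Real.dist_eq]
    linarith [abs_sub_le (doubleMean a N N') (ℓ k) L]
  rw [eventually_atTop_prod_self]
  refine ⟨max N₀ 1, fun N N' hN hN' => ?_⟩
  rcases le_total N N' with hNN' | hN'N
  · exact hclose N N' hN hNN'
  · rw [doubleMean_comm hs]
    exact hclose N' N hN' hN'N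

end AsympStationary

lemma cauchySeq_of_tendsto_inner {E : Type*} [NormedAddCommGroup E] [InnerProductSpace ℝ E]
    {x : ℕ → E} {L : ℝ} (h : Tendsto (fun p : ℕ × ℕ => inner ℝ (x p.1) (x p.2)) atTop (𝓝 L)) :
    CauchySeq x := by
  have hfst : Tendsto (fun p : ℕ × ℕ => (p.1, p.1)) atTop atTop :=
    tendsto_atTop_diagonal.comp (tendsto_fst.mono_left prod_atTop_atTop_eq.ge)
  have hsnd : Tendsto (fun p : ℕ × ℕ => (p.2, p.2)) atTop atTop :=
    tendsto_atTop_diagonal.comp (tendsto_snd.mono_left prod_atTop_atTop_eq.ge)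
  have hsq : Tendsto (fun p : ℕ × ℕ => dist (x p.1) (x p.2) ^ 2) atTop (𝓝 0) := by
    have := ((h.comp hfst).sub (h.const_mul 2)).add (h.comp hsnd)
    rw [show L - 2 * L + L = 0 by ring] at this
    refine this.congr fun p => ?_
    simp only [Function.comp_apply, dist_eq_norm, norm_sub_sq_real, real_inner_self_eq_norm_sq]
  rw [cauchySeq_iff_tendsto_dist_atTop_0]
  simpa using hsq.sqrt

lemma norm_mul_le_of_abs_le {x y C : ℝ} (hx : |x| ≤ C) (hy : |y| ≤ C) : ‖x * y‖ ≤ C * C := by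
  rw [Real.norm_eq_abs, abs_mul]
  exact mul_le_mul hx hy (abs_nonneg _) ((abs_nonneg _).trans hx)

section L2

variable {α : Type*} [MeasurableSpace α] {μ : Measure α}

lemma tendsto_integral_abs_sub_of_tendsto_Lp_two [IsFiniteMeasure μ] {g : ℕ → Lp ℝ 2 μ}
    {F : Lp ℝ 2 μ} (h : Tendsto g atTop (𝓝 F)) :
    Tendsto (fun N => ∫ y, |g N y - F y| ∂μ) atTop (𝓝 0) := by
  have h2 := (Lp.tendsto_Lp_iff_tendsto_eLpNorm' g F).1 h
  have hc : μ Set.univ ^ ((1 : ENNReal).toReal⁻¹ - (2 : ENNReal).toReal⁻¹) ≠ ⊤ :=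
    ENNReal.rpow_ne_top_of_nonneg (by norm_num) (measure_ne_top μ _)
  have h1 : Tendsto (fun N => eLpNorm (⇑(g N) - ⇑F) 1 μ) atTop (𝓝 0) := by
    refine tendsto_of_tendsto_of_tendsto_of_le_of_le tendsto_const_nhds
      (by simpa using ENNReal.Tendsto.mul_const h2 (Or.inr hc)) (fun _ => zero_le) fun N => ?_
    simpa using eLpNorm_le_eLpNorm_mul_rpow_measure_univ (p := 1) (q := 2) (by norm_num)
      ((Lp.aestronglyMeasurable (g N)).sub (Lp.aestronglyMeasurable F))
  have := (ENNReal.tendsto_toReal ENNReal.zero_ne_top).comp h1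
  refine this.congr fun N => ?_
  rw [Function.comp_apply, eLpNorm_one_eq_lintegral_enorm, ← integral_norm_eq_lintegral_enorm
    ((Lp.aestronglyMeasurable (g N)).sub (Lp.aestronglyMeasurable F))]
  simp only [Pi.sub_apply, Real.norm_eq_abs]

lemma integral_doubleMean {F : ℕ → ℕ → α → ℝ} (hF : ∀ n m, Integrable (F n m) μ) (N N' : ℕ) :
    ∫ y, doubleMean (fun n m => F n m y) N N' ∂μ =
      doubleMean (fun n m => ∫ y, F n m y ∂μ) N N' := by
  simp only [doubleMean, cesaroMean]
  rw [integral_const_mul, integral_finsetSum _ fun n _ =>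
    (integrable_finsetSum _ fun m _ => hF n m).const_mul _]
  refine congrArg _ (sum_congr rfl fun n _ => ?_)
  rw [integral_const_mul, integral_finsetSum _ fun m _ => hF n m]

variable [IsFiniteMeasure μ] {f : ℕ → α → ℝ} {C : ℝ}

lemma memLp_cesaroMean (hf : ∀ n, AEStronglyMeasurable (f n) μ) (hfC : ∀ n y, |f n y| ≤ C)
    (p : ENNReal) (N : ℕ) : MemLp (fun y => cesaroMean (fun n => f n y) N) p μ :=
  MemLp.of_bound ((Finset.aestronglyMeasurable_fun_sum _ fun n _ => hf n).const_mul _) C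
    (ae_of_all _ fun y => abs_cesaroMean_le_of_abs_le (fun n => hfC n y) N)

lemma integrable_mul_of_abs_le_s11 (hf : ∀ n, AEStronglyMeasurable (f n) μ)
    (hfC : ∀ n y, |f n y| ≤ C) (n m : ℕ) : Integrable (fun y => f n y * f m y) μ :=
  Integrable.of_bound ((hf n).mul (hf m)) (C * C)
    (ae_of_all μ fun y => norm_mul_le_of_abs_le (hfC n y) (hfC m y))

lemma integral_cesaroMean_mul_cesaroMean (hf : ∀ n, AEStronglyMeasurable (f n) μ)
    (hfC : ∀ n y, |f n y| ≤ C) (N N' : ℕ) :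
    ∫ y, cesaroMean (fun n => f n y) N * cesaroMean (fun n => f n y) N' ∂μ =
      doubleMean (fun n m => ∫ y, f n y * f m y ∂μ) N N' := by
  simp only [cesaroMean_mul_cesaroMean]
  exact integral_doubleMean (integrable_mul_of_abs_le_s11 hf hfC) N N'

theorem exists_tendsto_integral_abs_cesaroMean_sub (hf : ∀ n, AEStronglyMeasurable (f n) μ)
    (hfC : ∀ n y, |f n y| ≤ C) {L : ℝ}
    (hL : Tendsto (fun p : ℕ × ℕ => doubleMean (fun n m => ∫ y, f n y * f m y ∂μ) p.1 p.2)
      atTop (𝓝 L)) :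
    ∃ fbar : α → ℝ, Measurable fbar ∧ (∃ C', ∀ y, |fbar y| ≤ C') ∧
      Tendsto (fun N => ∫ y, |cesaroMean (fun n => f n y) N - fbar y| ∂μ) atTop (𝓝 0) := by
  set φ : ℕ → Lp ℝ 2 μ := fun N => (memLp_cesaroMean hf hfC 2 N).toLp _
  have hinner : ∀ N N', inner ℝ (φ N) (φ N') =
      doubleMean (fun n m => ∫ y, f n y * f m y ∂μ) N N' := by
    intro N N'
    rw [← integral_cesaroMean_mul_cesaroMean hf hfC, L2.inner_def]
    refine integral_congr_ae ?_
    filter_upwards [(memLp_cesaroMean hf hfC 2 N).coeFn_toLp,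
      (memLp_cesaroMean hf hfC 2 N').coeFn_toLp] with y hN hN'
    rw [hN, hN', Real.inner_apply]
  obtain ⟨F, hF⟩ := cauchySeq_tendsto_of_complete <|
    cauchySeq_of_tendsto_inner (x := φ) (L := L) (by simpa only [hinner] using hL)
  have hC : -|C| ≤ |C| := neg_le_self (abs_nonneg C)
  set clamp : ℝ → ℝ := fun x => Set.projIcc (-|C|) |C| hC x
  refine ⟨clamp ∘ F, (continuous_subtype_val.comp continuous_projIcc).measurable.comp
      (Lp.stronglyMeasurable F).measurable,
    ⟨|C|, fun y => abs_le.2 (Set.projIcc (-|C|) |C| hC (F y)).2⟩, ?_⟩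
  refine squeeze_zero (fun N => integral_nonneg fun y => abs_nonneg _) (fun N => ?_)
    (tendsto_integral_abs_sub_of_tendsto_Lp_two hF)
  refine integral_mono_of_nonneg (ae_of_all _ fun y => abs_nonneg _) ?_ ?_
  · exact (((Lp.memLp (φ N)).sub (Lp.memLp F)).integrable one_le_two).abs
  · filter_upwards [(memLp_cesaroMean hf hfC 2 N).coeFn_toLp] with y hN
    have hmem : cesaroMean (fun n => f n y) N ∈ Set.Icc (-|C|) |C| :=
      abs_le.1 ((abs_cesaroMean_le_of_abs_le (fun n => hfC n y) N).trans (le_abs_self C))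
    simp only [φ, hN, Function.comp_apply, clamp]
    have hclamp :=
      Set.abs_projIcc_sub_projIcc hC (c := cesaroMean (fun n => f n y) N) (d := F y)
    rwa [Set.projIcc_of_mem hC hmem] at hclamp

theorem exists_tendsto_correlations (hf : ∀ n, AEStronglyMeasurable (f n) μ)
    (hfC : ∀ n y, |f n y| ≤ C)
    (hA2 : ∀ m, 1 ≤ m → ∃ l, Tendsto (cesaroMean fun n => ∫ y, f n y * f m y ∂μ) atTop (𝓝 l))
    {ω : ℕ → ℝ} (hω : Tendsto ω atTop (𝓝 0))
    (hA3 : ∀ k k₁ k₂ : ℕ, 1 ≤ k → k ≤ k₁ → k₁ ≤ k₂ → ∀ n : ℕ,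
      |∫ y, (f k₁ y * f k₂ y - f (k₁ + n) y * f (k₂ + n) y) ∂μ| ≤ ω k) :
    ∃ ℓ : ℕ → ℝ, ∃ L : ℝ,
      (∀ m, 1 ≤ m → Tendsto (cesaroMean fun n => ∫ y, f n y * f m y ∂μ) atTop (𝓝 (ℓ m))) ∧
      Tendsto ℓ atTop (𝓝 L) ∧
      Tendsto (fun p : ℕ × ℕ => doubleMean (fun n m => ∫ y, f n y * f m y ∂μ) p.1 p.2)
        atTop (𝓝 L) := by
  set a : ℕ → ℕ → ℝ := fun n m => ∫ y, f n y * f m y ∂μ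
  have hA2' : ∀ m, ∃ l, 1 ≤ m → Tendsto (cesaroMean fun n => a n m) atTop (𝓝 l) := by
    intro m
    by_cases hm : 1 ≤ m
    · obtain ⟨l, hl⟩ := hA2 m hm
      exact ⟨l, fun _ => hl⟩
    · exact ⟨0, fun hm' => absurd hm' hm⟩
  choose ℓ hℓ using hA2'
  have hs : ∀ n m, a n m = a m n := fun n m => by simp only [a, mul_comm]
  have hB : ∀ n m, |a n m| ≤ C * C * μ.real Set.univ := fun n m => by
    simpa only [Real.norm_eq_abs] using
      norm_integral_le_of_norm_le_const
        (ae_of_all μ fun y => norm_mul_le_of_abs_le (hfC n y) (hfC m y))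
  have hst : AsympStationary a ω := fun k k₁ k₂ hk h₁ h₂ n => by
    rw [← integral_sub (integrable_mul_of_abs_le_s11 hf hfC _ _) (integrable_mul_of_abs_le_s11 hf hfC _ _)]
    exact hA3 k k₁ k₂ hk h₁ h₂ n
  have hrow : ∀ m, 1 ≤ m → Tendsto (cesaroMean (a m)) atTop (𝓝 (ℓ m)) := fun m hm => by
    rw [show a m = fun n => a n m from funext (hs m)]
    exact hℓ m hm
  obtain ⟨L, hL, hD⟩ := hst.exists_tendsto_doubleMean hω hs hB hrow
  exact ⟨ℓ, L, hℓ, hL, hD⟩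

end L2

theorem stmt11_general {M D : ℕ} (Q : Set (Fin M → ℝ))
    (hQfin : volume Q < ⊤)
    (U : ℕ → (Fin M → ℝ) → EuclideanSpace ℝ (Fin D)) (hU : ∀ n, Measurable (U n))
    (hA : ∀ b : EuclideanSpace ℝ (Fin D) → ℝ, Continuous b → HasCompactSupport b →
      (∀ m : ℕ, 1 ≤ m → ∃ l : ℝ,
        Tendsto (fun N : ℕ => (N : ℝ)⁻¹ *
            ∑ n ∈ Finset.Icc 1 N, ∫ y in Q, b (U n y) * b (U m y)) atTop (𝓝 l)) ∧
      (∃ ω : ℕ → ℝ, Tendsto ω atTop (𝓝 0) ∧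
        ∀ k k₁ k₂ : ℕ, 1 ≤ k → k ≤ k₁ → k₁ ≤ k₂ → ∀ n : ℕ,
          |∫ y in Q,
              (b (U k₁ y) * b (U k₂ y) - b (U (k₁ + n) y) * b (U (k₂ + n) y))| ≤ ω k)) :
    WeaklySConv Q U ∧
    (∀ b : EuclideanSpace ℝ (Fin D) → ℝ, Continuous b → HasCompactSupport b →
      ∃ bbar : (Fin M → ℝ) → ℝ, Measurable bbar ∧ (∃ C : ℝ, ∀ y, |bbar y| ≤ C) ∧
        Tendsto (fun N : ℕ =>
            ∫ y in Q, |(N : ℝ)⁻¹ * (∑ n ∈ Finset.Icc 1 N, b (U n y)) - bbar y|)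
          atTop (𝓝 0)) := by
  have : IsFiniteMeasure (volume.restrict Q) := isFiniteMeasure_restrict.2 hQfin.ne
  have hf : ∀ b : EuclideanSpace ℝ (Fin D) → ℝ, Continuous b → ∀ n,
      AEStronglyMeasurable (fun y => b (U n y)) (volume.restrict Q) :=
    fun b hb n => (hb.measurable.comp (hU n)).aestronglyMeasurable
  have hbound : ∀ b : EuclideanSpace ℝ (Fin D) → ℝ, Continuous b → HasCompactSupport b →
      ∃ C, ∀ n y, |b (U n y)| ≤ C := fun b hb hbc => by
    obtain ⟨C, hC⟩ := hbc.exists_bound_of_continuous hb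
    exact ⟨C, fun n y => hC (U n y)⟩
  refine ⟨fun b hb hbc => ?_, fun b hb hbc => ?_⟩ <;>
    obtain ⟨C, hC⟩ := hbound b hb hbc <;>
    obtain ⟨hA2, ω, hω, hA3⟩ := hA b hb hbc <;>
    obtain ⟨ℓ, L, hℓ, hL, hD⟩ := exists_tendsto_correlations (hf b hb) hC hA2 hω hA3
  · exact ⟨ℓ, hℓ, L, (hD.comp tendsto_atTop_diagonal).congr fun N => doubleMean_self _ N,
      hL.cesaroMean⟩
  · exact exists_tendsto_integral_abs_cesaroMean_sub (hf b hb) hC hD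

/-- Theorem 4.1: a weakly asymptotically stationary sequence — i.e. one
satisfying, for every `b ∈ C_c(ℝ^D)`, the correlation-limit condition (A2) and the
asymptotic correlation stationarity (A3) — is weakly (S)-convergent; in particular the
Cesàro averages `(1/N) ∑_{n=1}^N b(U_n)` converge strongly in `L¹(Q)` to some
`b̄ ∈ L^∞(Q)`. -/
theorem stmt11 {M D : ℕ} (Q : Set (Fin M → ℝ)) (hQm : MeasurableSet Q)
    (hQfin : volume Q < ⊤)
    (U : ℕ → (Fin M → ℝ) → EuclideanSpace ℝ (Fin D)) (hU : ∀ n, Measurable (U n))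
    (hA : ∀ b : EuclideanSpace ℝ (Fin D) → ℝ, Continuous b → HasCompactSupport b →
      (∀ m : ℕ, 1 ≤ m → ∃ l : ℝ,
        Tendsto (fun N : ℕ => (N : ℝ)⁻¹ *
            ∑ n ∈ Finset.Icc 1 N, ∫ y in Q, b (U n y) * b (U m y)) atTop (𝓝 l)) ∧
      (∃ ω : ℕ → ℝ, Tendsto ω atTop (𝓝 0) ∧
        ∀ k k₁ k₂ : ℕ, 1 ≤ k → k ≤ k₁ → k₁ ≤ k₂ → ∀ n : ℕ,
          |∫ y in Q,
              (b (U k₁ y) * b (U k₂ y) - b (U (k₁ + n) y) * b (U (k₂ + n) y))| ≤ ω k)) :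
    WeaklySConv Q U ∧
    (∀ b : EuclideanSpace ℝ (Fin D) → ℝ, Continuous b → HasCompactSupport b →
      ∃ bbar : (Fin M → ℝ) → ℝ, Measurable bbar ∧ (∃ C : ℝ, ∀ y, |bbar y| ≤ C) ∧
        Tendsto (fun N : ℕ =>
            ∫ y in Q, |(N : ℝ)⁻¹ * (∑ n ∈ Finset.Icc 1 N, b (U n y)) - bbar y|)
          atTop (𝓝 0)) :=
  stmt11_general Q hQfin U hU hA
end
end
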